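/- In the Weyl group W(A₃) ≅ S₄ with simple roots α₁, α₂, α₃, let Ψ = {±α₁, ±α₃} (type 2A₁) with J = {α₁, α₃} and Ψ' = {±(α₁+α₂)} (type A₁) with J' = {α₁+α₂}. Then N(Ψ) ∩ W(Ψ') = {e} and W(Ψ^⊥) ∩ W(Ψ'^⊥) = {e}, i.e. {J, J'} is a useful sub-system, and the set of Δ*-tabloids (cosets of N(Ψ) in W) has exactly 3 elements. -/

import Mathlib

/-!
Write `root (i, j) = e i - e j`. The reflection in `root (i, j)` permutes the basis vectors by the
transposition `(i j)`, so it sends `root p` to `root ((i j) • p)`. Now `Ψ` is the set of roots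
`e i - e (m i)` of the perfect matching `m = (0 1)(2 3)` of `{0, 1, 2, 3}`; hence `W` acts on
the `W`-translates of `Ψ` as `S₄` acts on perfect matchings by conjugation, and the orbit of `Ψ`
consists of the root sets of the three perfect matchings, so `[W : N(Ψ)] = 3`.
`W(Ψ') = {1, τ}` with `τ` the reflection in `e 0 - e 2`, and `τ α₁ = e 2 - e 1 ∉ Ψ`, so
`N(Ψ) ∩ W(Ψ') = 1`. Finally no root is orthogonal to both `α₁` and `α₃`, so `Ψ^⊥ = ∅` and
`W(Ψ^⊥) = 1`.
-/

open scoped Pointwise RealInnerProductSpace Classical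

noncomputable section

variable {V : Type*} [NormedAddCommGroup V] [InnerProductSpace ℝ V]

/-- The reflection `τ_α` in the hyperplane orthogonal to `α` (the identity if `α = 0`):
`τ_α v = v - 2 (⟪α, v⟫ / ⟪α, α⟫) • α`. -/
def tau (α : V) : V ≃ₗ[ℝ] V :=
  if hα : α = 0 then LinearEquiv.refl ℝ V
  else Module.reflection (f := (2 / ⟪α, α⟫) • (innerₛₗ ℝ α)) (x := α) (by
    have h : ⟪α, α⟫ ≠ 0 := inner_self_ne_zero.mpr hα
    simp only [LinearMap.smul_apply, innerₛₗ_apply_apply, smul_eq_mul]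
    field_simp)

/-- The reflection group generated by the reflections `τ_α`, `α ∈ Φ`. -/
def WeylGroup (Φ : Set V) : Subgroup (V ≃ₗ[ℝ] V) :=
  Subgroup.closure (tau '' Φ)

variable (Φ : Set V)

/-- The reflection subgroup `W(S)` of `W(Φ)` generated by reflections in elements of `S`. -/
def WeylSub (S : Set V) : Subgroup ↥(WeylGroup Φ) :=
  Subgroup.closure {w : ↥(WeylGroup Φ) | ∃ α ∈ S, (w : V ≃ₗ[ℝ] V) = tau α}

/-- `N(Ψ) = {w ∈ W | wΨ = Ψ}`, the setwise stabilizer of `Ψ` in the Weyl group. -/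
def NSub (Ψ : Set V) : Subgroup ↥(WeylGroup Φ) :=
  MulAction.stabilizer ↥(WeylGroup Φ) Ψ

/-- `Φ` is a (not necessarily crystallographic) root system. -/
def IsRootSystem : Prop :=
  Φ.Finite ∧ (∀ α ∈ Φ, α ≠ 0) ∧ (∀ α ∈ Φ, -α ∈ Φ) ∧
    (∀ α ∈ Φ, ∀ c : ℝ, c • α ∈ Φ → c = 1 ∨ c = -1) ∧
    ∀ α ∈ Φ, ∀ β ∈ Φ, tau α β ∈ Φ

/-- `Ψ` is a subsystem of `Φ`: a subset closed under its own reflections. -/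
def IsSubsystem (Ψ : Set V) : Prop :=
  Ψ ⊆ Φ ∧ ∀ α ∈ Ψ, ∀ β ∈ Ψ, tau α β ∈ Ψ

/-- `Φp` is a positive system in `Φ`. -/
def IsPositiveSystem (Φp : Set V) : Prop :=
  Φp ⊆ Φ ∧ ∀ α ∈ Φ, (α ∈ Φp ↔ ¬ (-α ∈ Φp))

/-- `J` is a simple system for the (sub)system `Ψ`: a linearly independent subset such that
every root of `Ψ` is a non-negative or non-positive combination of `J`. -/
def IsSimpleSystem (Ψ J : Set V) : Prop :=
  J ⊆ Ψ ∧ LinearIndependent ℝ ((↑) : J → V) ∧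
    ∀ α ∈ Ψ, ∃ f : V →₀ ℝ, ↑f.support ⊆ J ∧
      ((∀ v, 0 ≤ f v) ∨ (∀ v, f v ≤ 0)) ∧ α = f.sum fun v c => c • v

/-- `Ψ^⊥`: the largest subsystem of `Φ` orthogonal to `Ψ`. -/
def perp (Ψ : Set V) : Set V := {α ∈ Φ | ∀ β ∈ Ψ, ⟪α, β⟫ = 0}

/-- `{J, J'}` is a useful sub-system: `N(Ψ) ∩ W(Ψ') = 1` and `W(Ψ^⊥) ∩ W(Ψ'^⊥) = 1`. -/
def UsefulSubSystem (Ψ Ψ' : Set V) : Prop :=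
  NSub Φ Ψ ⊓ WeylSub Φ Ψ' = ⊥ ∧ WeylSub Φ (perp Φ Ψ) ⊓ WeylSub Φ (perp Φ Ψ') = ⊥

variable (K : Type*) [Field K]

/-- The set of Δ*-tabloids: left cosets of `N(Ψ)` in `W`. -/
abbrev Tab (Ψ : Set V) := ↥(WeylGroup Φ) ⧸ NSub Φ Ψ

/-- The permutation module `M^Ψ` with basis the Δ*-tabloids. -/
abbrev MPsi (Ψ : Set V) := Tab Φ Ψ →₀ K

/-- The action of `w ∈ W` on `M^Ψ`, permuting the tabloid basis. -/
def act {Ψ : Set V} (w : ↥(WeylGroup Φ)) (m : MPsi Φ K Ψ) : MPsi Φ K Ψ :=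
  Finsupp.mapDomain (fun t => w • t) m

/-- The sign `s(w) = (-1)^{ℓ(w)} = det w`, viewed in the field `K`. -/
def sgn (w : ↥(WeylGroup Φ)) : K :=
  if LinearMap.det ((w : V ≃ₗ[ℝ] V) : V →ₗ[ℝ] V) = 1 then 1 else -1

/-- `κ_{J'} = Σ_{σ ∈ W(Ψ')} s(σ) σ`, acting on `M^Ψ`. -/
def kappa (Ψ Ψ' : Set V) (m : MPsi Φ K Ψ) : MPsi Φ K Ψ :=
  ∑ᶠ σ ∈ (WeylSub Φ Ψ' : Set ↥(WeylGroup Φ)), sgn Φ K σ • act Φ K σ m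

/-- The generalized Δ*-polytabloid `e_{J,J'} = κ_{J'} {J}`. -/
def polytabloid (Ψ Ψ' : Set V) : MPsi Φ K Ψ :=
  kappa Φ K Ψ Ψ' (Finsupp.single (QuotientGroup.mk 1) 1)

/-- A good sub-system: a useful sub-system such that whenever `dΨ ∩ Ψ' = ∅`, the tabloid
`{dJ}` appears with non-zero coefficient in `e_{J,J'}`. -/
def GoodSubSystem (Ψ Ψ' : Set V) : Prop :=
  UsefulSubSystem Φ Ψ Ψ' ∧
    ∀ d : ↥(WeylGroup Φ), (d • Ψ) ∩ Ψ' = ∅ →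
      polytabloid Φ K Ψ Ψ' (QuotientGroup.mk d) ≠ 0

/-- The submodule of the generalized Specht module: span of all `w·e_{J,J'}`. -/
def SpechtSub (Ψ Ψ' : Set V) : Submodule K (MPsi Φ K Ψ) :=
  Submodule.span K (Set.range fun w : ↥(WeylGroup Φ) => act Φ K w (polytabloid Φ K Ψ Ψ'))

/-- The standard bilinear form on `M^Ψ` for which the tabloids are orthonormal. -/
def Bform (Ψ : Set V) : MPsi Φ K Ψ →ₗ[K] MPsi Φ K Ψ →ₗ[K] K :=
  Finsupp.lsum K fun t => LinearMap.toSpanSingleton K _ (Finsupp.lapply t)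

/-- The orthogonal complement `S^{Ψ,Ψ'⊥}` of the Specht submodule in `M^Ψ`. -/
def SpechtPerp (Ψ Ψ' : Set V) : Submodule K (MPsi Φ K Ψ) :=
  ⨅ y ∈ SpechtSub Φ K Ψ Ψ', LinearMap.ker ((Bform Φ K Ψ).flip y)

end

namespace A3Example

noncomputable section

abbrev V4 := EuclideanSpace ℝ (Fin 4)

/-- standard basis vectors -/
def e (i : Fin 4) : V4 := EuclideanSpace.single i 1

/-- the root system A₃: `{ε_i - ε_j | i ≠ j}` -/
def Phi : Set V4 := {x | ∃ i j : Fin 4, i ≠ j ∧ x = e i - e j}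

def a1 : V4 := e 0 - e 1
def a2 : V4 := e 1 - e 2
def a3 : V4 := e 2 - e 3

/-- `Ψ = {±α₁, ±α₃}` of type 2A₁, with simple system `J = {α₁, α₃}` -/
def Psi : Set V4 := {a1, -a1, a3, -a3}

/-- `Ψ' = {±(α₁+α₂)}` of type A₁, with simple system `J' = {α₁+α₂}` -/
def Psi' : Set V4 := {a1 + a2, -(a1 + a2)}


end

end A3Example

section Reflection

variable {V : Type*} [NormedAddCommGroup V] [InnerProductSpace ℝ V]

lemma tau_apply {α : V} (hα : α ≠ 0) (v : V) :
    tau α v = v - (2 / ⟪α, α⟫ * ⟪α, v⟫) • α := by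
  simp [tau, hα, Module.reflection_apply]

lemma tau_mul_self (α : V) : tau α * tau α = 1 := by
  by_cases hα : α = 0
  · simp [tau, hα]; rfl
  · ext v
    simpa [tau, hα] using Module.involutive_reflection _ v

lemma tau_neg (α : V) : tau (-α) = tau α := by
  by_cases hα : α = 0
  · simp [hα]
  · ext v
    simp [tau_apply hα, tau_apply (neg_ne_zero.mpr hα), inner_neg_left]

lemma tau_mem_weylGroup {Φ : Set V} {α : V} (hα : α ∈ Φ) : tau α ∈ WeylGroup Φ :=
  Subgroup.subset_closure ⟨α, hα, rfl⟩

lemma weylSub_empty (Φ : Set V) : WeylSub Φ ∅ = ⊥ := by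
  simp [WeylSub]

end Reflection

lemma Subgroup.inf_zpowers_eq_bot_of_sq_eq_one {G : Type*} [Group G] {H : Subgroup G} {g : G}
    (hg : g ^ 2 = 1) (hgH : g ∉ H) : H ⊓ Subgroup.zpowers g = ⊥ := by
  rw [eq_bot_iff]
  rintro _ ⟨hxH, n, rfl⟩
  dsimp only at hxH ⊢
  have hg' : g ^ (2 : ℤ) = 1 := mod_cast hg
  rw [zpow_eq_zpow_emod n hg'] at hxH ⊢
  rcases Int.emod_two_eq_zero_or_one n with hn | hn <;> rw [hn] at hxH ⊢ <;> simp_all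

section EuclideanRoots

open Equiv

variable {ι : Type*} [Fintype ι] [DecidableEq ι]

noncomputable def root (p : ι × ι) : EuclideanSpace ℝ ι :=
  EuclideanSpace.single p.1 1 - EuclideanSpace.single p.2 1

omit [Fintype ι] in
lemma root_apply (p : ι × ι) (k : ι) :
    root p k = (if k = p.1 then 1 else 0) - (if k = p.2 then 1 else 0) := by
  simp [root]

lemma inner_root_left (p : ι × ι) (v : EuclideanSpace ℝ ι) : ⟪root p, v⟫ = v p.1 - v p.2 := by
  simp [root, inner_sub_left, EuclideanSpace.inner_single_left]

omit [Fintype ι] in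
lemma root_self (i : ι) : root (i, i) = 0 := sub_self _

omit [Fintype ι] in
lemma root_injOn : Set.InjOn (root (ι := ι)) {p | p.1 ≠ p.2} := by
  rintro ⟨i, j⟩ hij ⟨k, l⟩ - h
  have hi := congrArg (· i) h
  have hj := congrArg (· j) h
  simp only [root_apply] at hi hj
  simp only [Set.mem_ofPred_eq] at hij
  ext <;> dsimp only <;> split_ifs at hi hj <;> simp_all <;> linarith

lemma tau_root_single (q : ι × ι) (k : ι) :
    tau (root q) (EuclideanSpace.single k 1) = EuclideanSpace.single (swap q.1 q.2 k) 1 := by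
  obtain ⟨i, j⟩ := q
  rcases eq_or_ne i j with rfl | hij
  · simp [root_self, tau]
  have hroot : root (i, j) ≠ 0 := fun h => by simpa [root_apply, hij] using congrArg (· i) h
  have hnorm : root (i, j) i - root (i, j) j = 2 := by
    norm_num [root_apply, hij, hij.symm]
  rw [tau_apply hroot, inner_root_left, inner_root_left, hnorm, div_self two_ne_zero, one_mul]
  rcases eq_or_ne k i with rfl | hki
  · simp [hij, root]
  rcases eq_or_ne k j with rfl | hkj
  · simp [hij.symm, root]
  · simp [hki, hkj, swap_apply_of_ne_of_ne hki hkj]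

lemma tau_root_root (q p : ι × ι) : tau (root q) (root p) = root (swap q.1 q.2 • p) := by
  rw [show root p = EuclideanSpace.single p.1 1 - EuclideanSpace.single p.2 1 from rfl, map_sub,
    tau_root_single, tau_root_single]
  rfl

/-- For a fixed-point-free involution `m`, i.e. a perfect matching of `ι`, this is the subsystem
of type `k A₁` whose components are the pairs of the matching. -/
def matchingRoots (m : Perm ι) : Set (EuclideanSpace ℝ ι) := Set.range fun i => root (i, m i)

lemma tau_root_smul_matchingRoots (q : ι × ι) (m : Perm ι) :
    tau (root q) • matchingRoots m = matchingRoots (swap q.1 q.2 * m * (swap q.1 q.2)⁻¹) := by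
  set c := swap q.1 q.2
  rw [matchingRoots, ← Set.image_smul, ← Set.range_comp, matchingRoots,
    ← c.symm.surjective.range_comp]
  congr 1
  ext i
  simp [tau_root_root, c]

omit [Fintype ι] in
lemma matchingRoots_injOn : Set.InjOn (matchingRoots (ι := ι)) {m | ∀ i, m i ≠ i} := by
  intro m hm m' hm' h
  ext i
  obtain ⟨j, hj⟩ : root (i, m i) ∈ matchingRoots m' := h ▸ ⟨i, rfl⟩
  have := root_injOn (hm' j).symm (hm i).symm hj
  simp only [Prod.mk.injEq] at this
  obtain ⟨rfl, h'⟩ := this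
  exact h'.symm

end EuclideanRoots

namespace A3Example

open Equiv MulAction

lemma root_mem_Phi {i j : Fin 4} (hij : i ≠ j) : root (i, j) ∈ Phi := ⟨i, j, hij, rfl⟩

def matching0 : Perm (Fin 4) := swap 0 1 * swap 2 3

def matchings : Finset (Perm (Fin 4)) := {matching0, swap 0 2 * swap 1 3, swap 0 3 * swap 1 2}

def tabloidRoots : Set (Set V4) := matchingRoots '' (matchings : Set (Perm (Fin 4)))

lemma matchings_subset_fixedPointFree : (matchings : Set (Perm (Fin 4))) ⊆ {m | ∀ i, m i ≠ i} :=
  fun m hm => (by decide : ∀ m ∈ matchings, ∀ i, m i ≠ i) m hm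

lemma conj_swap_mem_matchings :
    ∀ i j : Fin 4, ∀ m ∈ matchings, swap i j * m * (swap i j)⁻¹ ∈ matchings := by
  decide

lemma exists_conj_swap_matching0_eq :
    ∀ m ∈ matchings, ∃ i j : Fin 4, i ≠ j ∧ m = swap i j * matching0 * (swap i j)⁻¹ := by
  decide

lemma Psi_eq_matchingRoots : Psi = matchingRoots matching0 := by
  have hm : ∀ i, matching0 i = ![1, 0, 3, 2] i := by decide
  have hneg : ∀ i j : Fin 4, -root (i, j) = root (j, i) := fun i j => neg_sub _ _
  rw [Psi, show a1 = root (0, 1) from rfl, show a3 = root (2, 3) from rfl, hneg, hneg]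
  ext v
  simp [matchingRoots, hm, Fin.exists_fin_succ, eq_comm]

lemma smul_mem_tabloidRoots {g : V4 ≃ₗ[ℝ] V4} (hg : g ∈ WeylGroup Phi) :
    ∀ S ∈ tabloidRoots, g • S ∈ tabloidRoots := by
  have hgen : ∀ α ∈ Phi, ∀ S ∈ tabloidRoots, tau α • S ∈ tabloidRoots := by
    rintro _ ⟨i, j, -, rfl⟩ _ ⟨m, hm, rfl⟩
    change tau (root (i, j)) • _ ∈ _
    rw [tau_root_smul_matchingRoots]
    exact ⟨_, conj_swap_mem_matchings i j m hm, rfl⟩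
  induction hg using Subgroup.closure_induction'' with
  | mem _ hx =>
    obtain ⟨α, hα, rfl⟩ := hx
    exact hgen α hα
  | inv_mem _ hx =>
    obtain ⟨α, hα, rfl⟩ := hx
    rw [inv_eq_of_mul_eq_one_right (tau_mul_self α)]
    exact hgen α hα
  | one => simp
  | mul x y _ _ hx hy => exact fun S hS => mul_smul x y S ▸ hx _ (hy S hS)

lemma orbit_Psi : orbit (WeylGroup Phi) Psi = tabloidRoots := by
  apply Set.Subset.antisymm
  · rintro _ ⟨w, rfl⟩
    exact smul_mem_tabloidRoots w.2 Psi ⟨matching0, by simp [matchings], Psi_eq_matchingRoots.symm⟩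
  · rintro _ ⟨m, hm, rfl⟩
    obtain ⟨i, j, hij, rfl⟩ := exists_conj_swap_matching0_eq m hm
    refine ⟨⟨tau (root (i, j)), tau_mem_weylGroup (root_mem_Phi hij)⟩, ?_⟩
    change tau (root (i, j)) • Psi = _
    rw [Psi_eq_matchingRoots, tau_root_smul_matchingRoots]

lemma card_tab_Psi : Nat.card (Tab Phi Psi) = 3 := by
  change (NSub Phi Psi).index = 3
  rw [NSub, index_stabilizer, orbit_Psi, tabloidRoots,
    (matchingRoots_injOn.mono matchings_subset_fixedPointFree).ncard_image,
    Set.ncard_coe_finset]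
  decide

noncomputable def reflectionPsi' : WeylGroup Phi :=
  ⟨tau (root (0, 2)), tau_mem_weylGroup (root_mem_Phi (by decide))⟩

lemma weylSub_Psi'_eq_zpowers : WeylSub Phi Psi' = Subgroup.zpowers reflectionPsi' := by
  have ha : a1 + a2 = root (0, 2) := sub_add_sub_cancel _ _ _
  rw [Subgroup.zpowers_eq_closure, WeylSub]
  congr 1
  ext w
  simp only [Psi', ha, Set.mem_insert_iff, Set.mem_singleton_iff, exists_eq_or_imp, exists_eq_left,
    tau_neg, or_self, Set.mem_ofPred_eq]
  rw [Subtype.ext_iff]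
  rfl

lemma reflectionPsi'_not_mem_nSub : reflectionPsi' ∉ NSub Phi Psi := by
  rw [NSub, mem_stabilizer_iff, Subgroup.smul_def, Psi_eq_matchingRoots]
  change tau (root (0, 2)) • _ ≠ _
  rw [tau_root_smul_matchingRoots]
  intro h
  have hne : swap (0 : Fin 4) 2 * matching0 * (swap 0 2)⁻¹ ≠ matching0 := by decide
  exact hne (matchingRoots_injOn (matchings_subset_fixedPointFree (by decide))
    (matchings_subset_fixedPointFree (by decide)) h)

lemma nSub_Psi_inf_weylSub_Psi' : NSub Phi Psi ⊓ WeylSub Phi Psi' = ⊥ := by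
  rw [weylSub_Psi'_eq_zpowers]
  exact Subgroup.inf_zpowers_eq_bot_of_sq_eq_one (by rw [sq]; exact Subtype.ext (tau_mul_self _))
    reflectionPsi'_not_mem_nSub

-- `⟪e i - e j, α₁⟫ = ⟪e i - e j, α₃⟫ = 0` forces `{i, j}` to miss both `{0, 1}` and `{2, 3}`.
lemma perp_Phi_Psi : perp Phi Psi = ∅ := by
  refine Set.eq_empty_of_forall_notMem ?_
  rintro _ ⟨⟨i, j, hij, rfl⟩, horth⟩
  have h1 : ⟪root (i, j), root (0, 1)⟫ = 0 := horth a1 (by simp [Psi])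
  have h3 : ⟪root (i, j), root (2, 3)⟫ = 0 := horth a3 (by simp [Psi])
  simp only [inner_root_left, root_apply] at h1 h3
  revert hij h1 h3
  fin_cases i <;> fin_cases j <;> norm_num [Fin.ext_iff]

lemma weylSub_perp_Psi_inf_weylSub_perp_Psi' :
    WeylSub Phi (perp Phi Psi) ⊓ WeylSub Phi (perp Phi Psi') = ⊥ := by
  rw [perp_Phi_Psi, weylSub_empty, bot_inf_eq]

/-- `{J, J'}` is a useful sub-system in A₃ and there are exactly 3 Δ*-tabloids. -/
theorem statement16 :
    NSub Phi Psi ⊓ WeylSub Phi Psi' = ⊥ ∧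
    WeylSub Phi (perp Phi Psi) ⊓ WeylSub Phi (perp Phi Psi') = ⊥ ∧
    UsefulSubSystem Phi Psi Psi' ∧
    Nat.card (Tab Phi Psi) = 3 :=
  ⟨nSub_Psi_inf_weylSub_Psi', weylSub_perp_Psi_inf_weylSub_perp_Psi',
    ⟨nSub_Psi_inf_weylSub_Psi', weylSub_perp_Psi_inf_weylSub_perp_Psi'⟩, card_tab_Psi⟩

end A3Example
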